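/- Let A_n = 1/n − ln((n+1)/n), and let N₁(n), N₀(n) count the ones and zeros in the binary expansion of n. Then for every positive integer k, Σ_{n=2^{k−1}}^{2^k−1} |N₁(n) − N₀(n)| · A_n ≤ Σ_{n=2^{k−1}}^{2^k−1} (N₁(n) + N₀(n)) · A_n < k/2^k. -/

import Mathlib

open Real

/-- Number of ones in the binary expansion of `n`. -/
def N1 (n : ℕ) : ℕ := (Nat.digits 2 n).count 1

/-- Number of zeros in the binary expansion of `n`. -/
def N0 (n : ℕ) : ℕ := (Nat.digits 2 n).count 0

/-- `A n = 1/n - ln((n+1)/n)`. -/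
noncomputable def A (n : ℕ) : ℝ := 1 / (n : ℝ) - Real.log (((n : ℝ) + 1) / (n : ℝ))

/-!
On the block `2^(k-1) ≤ n < 2^k` every binary expansion has exactly `k` digits, so
`N₁(n) + N₀(n) = k` and the first inequality is `|a - b| ≤ a + b` for `a, b ≥ 0` (using `A n ≥ 0`).
For the second, `ln(1 + 1/n) > 1/(n+1)` gives `A n < 1/n - 1/(n+1)`, which telescopes over the
block to `1/2^(k-1) - 1/2^k = 1/2^k`.
-/

open Finset

theorem List.count_one_add_count_zero {l : List ℕ} (h : ∀ x ∈ l, x < 2) :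
    l.count 1 + l.count 0 = l.length := by
  induction l with
  | nil => rfl
  | cons a l ih =>
    have ha : a < 2 := h a List.mem_cons_self
    have hl := ih fun x hx => h x (List.mem_cons_of_mem a hx)
    interval_cases a <;> simp <;> omega

theorem N1_add_N0_of_mem_Ico {j n : ℕ} (hn : n ∈ Ico (2 ^ j) (2 ^ (j + 1))) :
    N1 n + N0 n = j + 1 := by
  obtain ⟨hlo, hhi⟩ := mem_Ico.mp hn
  have hn0 : n ≠ 0 := (Nat.two_pow_pos j).trans_le hlo |>.ne'
  rw [N1, N0, List.count_one_add_count_zero fun _ hx => Nat.digits_lt_base one_lt_two hx,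
    Nat.length_digits 2 n one_lt_two hn0, Nat.log_eq_of_pow_le_of_lt_pow hlo hhi]

theorem A_nonneg (n : ℕ) : 0 ≤ A n := by
  rcases Nat.eq_zero_or_pos n with rfl | hn
  · simp [A]
  have hn' : (0 : ℝ) < n := Nat.cast_pos.mpr hn
  have hlog := Real.log_le_sub_one_of_pos (x := ((n : ℝ) + 1) / n) (by positivity)
  have hsub : ((n : ℝ) + 1) / n - 1 = 1 / n := by field_simp; ring
  rw [hsub] at hlog
  exact sub_nonneg.mpr hlog

theorem A_lt_one_div_sub_one_div {n : ℕ} (hn : 0 < n) :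
    A n < 1 / n - 1 / (n + 1) := by
  have hn' : (0 : ℝ) < n := Nat.cast_pos.mpr hn
  have hlog := Real.log_lt_sub_one_of_pos (x := (n : ℝ) / (n + 1)) (by positivity)
    (by rw [Ne, div_eq_one_iff_eq (by positivity)]; linarith)
  have hinv : Real.log ((n : ℝ) / (n + 1)) = -Real.log ((n + 1) / n) := by
    rw [← Real.log_inv, inv_div]
  have hsub : (n : ℝ) / (n + 1) - 1 = -(1 / (n + 1)) := by field_simp; ring
  rw [hinv, hsub] at hlog
  rw [A]
  linarith

theorem sum_Ico_A_lt {m l : ℕ} (hm : 0 < m) (hml : m < l) :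
    ∑ n ∈ Ico m l, A n < 1 / m - 1 / l :=
  calc ∑ n ∈ Ico m l, A n
      < ∑ n ∈ Ico m l, (1 / (n : ℝ) - 1 / (n + 1)) :=
        sum_lt_sum_of_nonempty (nonempty_Ico.mpr hml) fun n hn =>
          A_lt_one_div_sub_one_div (hm.trans_le (mem_Ico.mp hn).1)
    _ = 1 / m - 1 / l := by
      convert sum_Ico_sub (fun i : ℕ => -(1 / (i : ℝ))) hml.le using 1
      · exact sum_congr rfl fun n _ => by push_cast; ring
      · ring

/-- Remainder estimate: `∑ |N₁(n) - N₀(n)| A_n ≤ ∑ (N₁(n) + N₀(n)) A_n < k / 2^k`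
where the sums run over `2^{k-1} ≤ n ≤ 2^k - 1`. -/
theorem remainder_estimate (k : ℕ) (hk : 1 ≤ k) :
    (∑ n ∈ Finset.Icc (2 ^ (k - 1)) (2 ^ k - 1), |(N1 n : ℝ) - (N0 n : ℝ)| * A n ≤
      ∑ n ∈ Finset.Icc (2 ^ (k - 1)) (2 ^ k - 1), ((N1 n + N0 n : ℕ) : ℝ) * A n) ∧
    ∑ n ∈ Finset.Icc (2 ^ (k - 1)) (2 ^ k - 1), ((N1 n + N0 n : ℕ) : ℝ) * A n <
      (k : ℝ) / 2 ^ k := by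
  obtain ⟨j, rfl⟩ : ∃ j, k = j + 1 := ⟨k - 1, by omega⟩
  rw [Nat.add_sub_cancel, Icc_sub_one_right_eq_Ico_of_not_isMin (by simp)]
  refine ⟨sum_le_sum fun n _ => mul_le_mul_of_nonneg_right ?_ (A_nonneg n), ?_⟩
  · push_cast
    exact (abs_sub _ _).trans (by simp)
  calc ∑ n ∈ Ico (2 ^ j) (2 ^ (j + 1)), ((N1 n + N0 n : ℕ) : ℝ) * A n
      = (j + 1 : ℝ) * ∑ n ∈ Ico (2 ^ j) (2 ^ (j + 1)), A n := by
        rw [mul_sum]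
        exact sum_congr rfl fun n hn => by rw [N1_add_N0_of_mem_Ico hn]; push_cast; rfl
    _ < (j + 1 : ℝ) * (1 / 2 ^ j - 1 / 2 ^ (j + 1)) := by
        gcongr
        exact_mod_cast sum_Ico_A_lt (Nat.two_pow_pos j)
          (Nat.pow_lt_pow_right one_lt_two j.lt_succ_self)
    _ = ((j + 1 : ℕ) : ℝ) / 2 ^ (j + 1) := by push_cast; field_simp; ring
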